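/- arXiv:2003.06928 — 6 statements merged into one kernel-verified Lean document; each statement's English description precedes it below -/
import Mathlib

section
/- Let L be a resolvent positive linear operator on the space of real symmetric n×n matrices, and let T > 0. Suppose X, Z : [0,T] → (symmetric n×n real matrices) are differentiable functions such that X(t) is positive semidefinite for all t ∈ [0,T], the derivative satisfies X'(t) ≤ L(X(t)) for all t ∈ [0,T] (i.e., L(X(t)) − X'(t) is positive semidefinite), Z solves the matrix differential equation Z'(t) = L(Z(t)) with Z(t) positive semidefinite for all t ∈ [0,T], and X(0) ≤ Z(0). Then X(t) ≤ Z(t) for all t ∈ [0,T]. -/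
/-!
Put `W = Z - X`, so that `W' - L W = L X - X'` is positive semidefinite. Choose `K` with
`K • 1 - L 1` positive definite; then `W_ε t = W t + ε e^{K t} • 1` satisfies
`W_ε' = L W_ε + (L X - X') + ε e^{K t} (K • 1 - L 1)`. It starts positive definite, and at the first
time `τ` where it fails to be, it is positive semidefinite with a kernel vector `v`. Since
`v ⬝ᵥ W_ε s *ᵥ v` is positive for `s < τ` and vanishes at `τ`, its derivative `v ⬝ᵥ W_ε' τ *ᵥ v` is
nonpositive, whereas the three terms above make it positive. Letting `ε → 0` gives `W t ≥ 0`.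

Resolvent positivity enters only through cross-positivity: if `A ≥ 0` and `A v = 0`, then
`v ⬝ᵥ L A *ᵥ v ≥ 0`. Indeed `B_α = (α - L)⁻¹ A ≥ 0` satisfies `α B_α → A` as `α → ∞`, and
`v ⬝ᵥ L (α B_α) *ᵥ v = α² (v ⬝ᵥ B_α *ᵥ v) ≥ 0`.
-/

open Matrix Set

/-- A linear operator `L` on real `n × n` matrices, mapping symmetric matrices to symmetric
matrices, is *resolvent positive* if there is `α₀ ∈ ℝ` such that for every `α > α₀` the
operator `α • id - L`, restricted to symmetric matrices, is bijective and its inverse maps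
every symmetric positive semidefinite matrix to a symmetric positive semidefinite matrix. -/
def ResolventPositive {n : ℕ} (L : Matrix (Fin n) (Fin n) ℝ → Matrix (Fin n) (Fin n) ℝ) : Prop :=
  ∃ α₀ : ℝ, ∀ α : ℝ, α₀ < α →
    (∀ Y : Matrix (Fin n) (Fin n) ℝ, Y.IsSymm →
      ∃! X : Matrix (Fin n) (Fin n) ℝ, X.IsSymm ∧ α • X - L X = Y) ∧
    (∀ X Y : Matrix (Fin n) (Fin n) ℝ, X.IsSymm → α • X - L X = Y → Y.PosSemidef →
      X.PosSemidef)

open Filter Topology Metric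

attribute [local instance] Matrix.normedAddCommGroup Matrix.normedSpace

theorem HasDerivWithinAt.nonpos_of_forall_Ico_le {f : ℝ → ℝ} {f' a τ : ℝ} {s : Set ℝ}
    (hf : HasDerivWithinAt f f' s τ) (hs : Ico a τ ⊆ s) (haτ : a < τ)
    (hle : ∀ x ∈ Ico a τ, f τ ≤ f x) : f' ≤ 0 := by
  have := right_nhdsWithin_Ico_neBot haτ
  have hslope := (hasDerivWithinAt_iff_tendsto_slope.1 hf).mono_left
    (nhdsWithin_mono _ fun x hx => ⟨hs hx, hx.2.ne⟩)
  refine le_of_tendsto hslope (eventually_nhdsWithin_of_forall fun x hx => ?_)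
  rw [slope_def_field]
  exact div_nonpos_of_nonneg_of_nonpos (sub_nonneg.2 (hle x hx)) (sub_nonpos.2 hx.2.le)

namespace Matrix

variable {ι : Type*} [Fintype ι]

theorem isClosed_setOf_posSemidef : IsClosed {M : Matrix ι ι ℝ | M.PosSemidef} := by
  have hsymm : IsClosed {M : Matrix ι ι ℝ | Mᵀ = M} :=
    isClosed_eq continuous_id.matrix_transpose continuous_id
  have hquad (v : ι → ℝ) : IsClosed {M : Matrix ι ι ℝ | 0 ≤ v ⬝ᵥ M *ᵥ v} :=
    isClosed_le continuous_const
      (continuous_const.dotProduct (continuous_id.matrix_mulVec continuous_const))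
  convert hsymm.inter (isClosed_iInter hquad) using 1
  ext M
  simp [posSemidef_iff_dotProduct_mulVec, IsHermitian, mem_iInter]

theorem posSemidef_of_forall_posDef_add_smul {M N : Matrix ι ι ℝ}
    (h : ∀ ε : ℝ, 0 < ε → (M + ε • N).PosDef) : M.PosSemidef := by
  have hlim : Tendsto (fun ε : ℝ => M + ε • N) (𝓝[>] 0) (𝓝 M) := by
    have hcont : Continuous fun ε : ℝ => M + ε • N := by fun_prop
    simpa using hcont.continuousWithinAt (s := Ioi 0) (x := 0) |>.tendsto
  exact isClosed_setOf_posSemidef.mem_of_tendsto hlim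
    (eventually_nhdsWithin_of_forall fun ε hε => (h ε hε).posSemidef)

theorem posDef_iff_forall_mem_sphere {M : Matrix ι ι ℝ} (hM : M.IsSymm) :
    M.PosDef ↔ ∀ v ∈ sphere (0 : ι → ℝ) 1, 0 < v ⬝ᵥ M *ᵥ v := by
  simp only [posDef_iff_dotProduct_mulVec, isHermitian_iff_isSymm, hM, true_and, star_trivial]
  refine ⟨fun h v hv => h (ne_of_mem_sphere hv one_ne_zero), fun h v hv => ?_⟩
  have hunit := h (‖v‖⁻¹ • v) (by
    rw [mem_sphere_zero_iff_norm, norm_smul, norm_inv, norm_norm,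
      inv_mul_cancel₀ (norm_ne_zero_iff.2 hv)])
  rw [mulVec_smul, dotProduct_smul, smul_dotProduct, smul_eq_mul, smul_eq_mul] at hunit
  have hinv : 0 < ‖v‖⁻¹ := by positivity
  exact pos_of_mul_pos_right (pos_of_mul_pos_right hunit hinv.le) hinv.le

theorem isOpen_setOf_forall_mem_sphere_dotProduct_mulVec_pos :
    IsOpen {M : Matrix ι ι ℝ | ∀ v ∈ sphere (0 : ι → ℝ) 1, 0 < v ⬝ᵥ M *ᵥ v} := by
  refine isOpen_iff_mem_nhds.2 fun M₀ hM₀ =>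
    (isCompact_sphere 0 1).eventually_forall_of_forall_eventually fun v hv => ?_
  have hq : Continuous fun p : Matrix ι ι ℝ × (ι → ℝ) => p.2 ⬝ᵥ p.1 *ᵥ p.2 :=
    continuous_snd.dotProduct (continuous_fst.matrix_mulVec continuous_snd)
  exact hq.continuousAt.eventually (lt_mem_nhds (hM₀ v hv))

theorem exists_dotProduct_mulVec_lt (M : Matrix ι ι ℝ) :
    ∃ K : ℝ, ∀ v ≠ 0, v ⬝ᵥ M *ᵥ v < K * (v ⬝ᵥ v) := by
  refine ⟨∑ i, ∑ j, |M i j| + 1, fun v hv => ?_⟩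
  have hsq (i : ι) : v i ^ 2 ≤ v ⬝ᵥ v := by
    simpa [dotProduct, sq] using Finset.single_le_sum (f := fun j => v j * v j)
      (fun j _ => mul_self_nonneg (v j)) (Finset.mem_univ i)
  have hpos : 0 < v ⬝ᵥ v := by simpa using dotProduct_star_self_pos_iff.2 hv
  have hterm (i j : ι) : v i * (M i j * v j) ≤ |M i j| * (v ⬝ᵥ v) := by
    have hij : |v i| * |v j| ≤ v ⬝ᵥ v := by
      nlinarith [two_mul_le_add_sq |v i| |v j|, sq_abs (v i), sq_abs (v j), hsq i, hsq j]
    calc v i * (M i j * v j) ≤ |v i * (M i j * v j)| := le_abs_self _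
      _ = |M i j| * (|v i| * |v j|) := by rw [abs_mul, abs_mul]; ring
      _ ≤ |M i j| * (v ⬝ᵥ v) := mul_le_mul_of_nonneg_left hij (abs_nonneg _)
  calc v ⬝ᵥ M *ᵥ v = ∑ i, ∑ j, v i * (M i j * v j) := by
        simp [dotProduct, mulVec, Finset.mul_sum]
    _ ≤ ∑ i, ∑ j, |M i j| * (v ⬝ᵥ v) :=
        Finset.sum_le_sum fun i _ => Finset.sum_le_sum fun j _ => hterm i j
    _ < (∑ i, ∑ j, |M i j| + 1) * (v ⬝ᵥ v) := by
        simp only [← Finset.sum_mul]; linarith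

theorem hasDerivWithinAt_iff_apply {W : ℝ → Matrix ι ι ℝ} {W' : Matrix ι ι ℝ} {s : Set ℝ}
    {t : ℝ} :
    HasDerivWithinAt W W' s t ↔ ∀ i j, HasDerivWithinAt (fun r => W r i j) (W' i j) s t :=
  hasDerivWithinAt_pi.trans (forall_congr' fun _ => hasDerivWithinAt_pi)

theorem _root_.HasDerivWithinAt.dotProduct_mulVec {W : ℝ → Matrix ι ι ℝ} {W' : Matrix ι ι ℝ}
    {s : Set ℝ} {t : ℝ} (h : HasDerivWithinAt W W' s t) (v : ι → ℝ) :
    HasDerivWithinAt (fun r => v ⬝ᵥ W r *ᵥ v) (v ⬝ᵥ W' *ᵥ v) s t := by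
  let q : Matrix ι ι ℝ →ₗ[ℝ] ℝ :=
    { toFun := fun M => v ⬝ᵥ M *ᵥ v
      map_add' := fun M N => by simp only [add_mulVec, dotProduct_add]
      map_smul' := fun c M => by simp only [smul_mulVec, dotProduct_smul, RingHom.id_apply] }
  exact (LinearMap.toContinuousLinearMap q).hasFDerivAt.comp_hasDerivWithinAt t h

theorem posDef_Icc_of_deriv_pos_on_ker {W W' : ℝ → Matrix ι ι ℝ} {T : ℝ}
    (hsymm : ∀ t ∈ Icc 0 T, (W t).IsSymm)
    (hderiv : ∀ t ∈ Icc 0 T, HasDerivWithinAt W (W' t) (Icc 0 T) t)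
    (h0 : (W 0).PosDef)
    (hker : ∀ t ∈ Icc 0 T, (W t).PosSemidef → ∀ v ≠ 0, W t *ᵥ v = 0 →
      0 < v ⬝ᵥ W' t *ᵥ v) :
    ∀ t ∈ Icc 0 T, (W t).PosDef := by
  set P := {M : Matrix ι ι ℝ | ∀ v ∈ sphere (0 : ι → ℝ) 1, 0 < v ⬝ᵥ M *ᵥ v}
  have hP : ∀ t ∈ Icc 0 T, (W t).PosDef ↔ W t ∈ P := fun t ht =>
    posDef_iff_forall_mem_sphere (hsymm t ht)
  have hcont : ContinuousOn W (Icc 0 T) := fun t ht => (hderiv t ht).continuousWithinAt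
  set S := Icc 0 T ∩ W ⁻¹' Pᶜ
  have hS : IsClosed S := hcont.preimage_isClosed_of_isClosed isClosed_Icc
    isOpen_setOf_forall_mem_sphere_dotProduct_mulVec_pos.isClosed_compl
  by_contra! ⟨t, ht, hnot⟩
  have hτ : sInf S ∈ S := hS.csInf_mem ⟨t, ht, mt (hP t ht).2 hnot⟩ ⟨0, fun s hs => hs.1.1⟩
  set τ := sInf S
  have hbefore : ∀ s ∈ Icc 0 T, s < τ → (W s).PosDef := fun s hs hlt =>
    (hP s hs).2 (by_contra fun hns => hlt.not_ge (csInf_le ⟨0, fun r hr => hr.1.1⟩ ⟨hs, hns⟩))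
  have hτpos : 0 < τ := by
    refine hτ.1.1.lt_of_ne fun h => hτ.2 ?_
    rw [← h]
    exact (posDef_iff_forall_mem_sphere (isHermitian_iff_isSymm.1 h0.1)).1 h0
  obtain ⟨v, hv, hvτ⟩ : ∃ v ∈ sphere (0 : ι → ℝ) 1, v ⬝ᵥ W τ *ᵥ v ≤ 0 := by
    simpa [P] using hτ.2
  have hIco : Ico 0 τ ⊆ Icc 0 T := Ico_subset_Icc_self.trans (Icc_subset_Icc_right hτ.1.2)
  have hpsd : (W τ).PosSemidef := by
    have := right_nhdsWithin_Ico_neBot hτpos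
    exact isClosed_setOf_posSemidef.mem_of_tendsto ((hcont τ hτ.1).mono hIco)
      (eventually_nhdsWithin_of_forall fun s hs => (hbefore s (hIco hs) hs.2).posSemidef)
  have hvτ0 : v ⬝ᵥ W τ *ᵥ v = 0 :=
    le_antisymm hvτ (by simpa using hpsd.dotProduct_mulVec_nonneg v)
  have hWv : W τ *ᵥ v = 0 := (hpsd.dotProduct_mulVec_zero_iff v).1 (by simpa using hvτ0)
  have hnonpos : v ⬝ᵥ W' τ *ᵥ v ≤ 0 :=
    ((hderiv τ hτ.1).dotProduct_mulVec v).nonpos_of_forall_Ico_le hIco hτpos fun s hs => by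
      simpa [hvτ0] using (hbefore s (hIco hs) hs.2).posSemidef.dotProduct_mulVec_nonneg v
  exact (hker τ hτ.1 hpsd v (ne_of_mem_sphere hv one_ne_zero) hWv).not_ge hnonpos

end Matrix

namespace ResolventPositive

variable {n : ℕ} {L : Matrix (Fin n) (Fin n) ℝ →ₗ[ℝ] Matrix (Fin n) (Fin n) ℝ}

theorem dotProduct_mulVec_nonneg_of_mulVec_eq_zero (hL : ResolventPositive (fun M => L M))
    {A : Matrix (Fin n) (Fin n) ℝ} (hA : A.PosSemidef) {v : Fin n → ℝ} (hv : A *ᵥ v = 0) :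
    0 ≤ v ⬝ᵥ L A *ᵥ v := by
  obtain ⟨α₀, hres⟩ := hL
  obtain ⟨C, hC, hLC⟩ : ∃ C, 0 < C ∧ ∀ M, ‖L M‖ ≤ C * ‖M‖ :=
    (LinearMap.toContinuousLinearMap L).bound
  have happrox : ∀ α, max α₀ C < α →
      ∃ B, 0 ≤ v ⬝ᵥ L (α • B) *ᵥ v ∧ ‖α • B - A‖ ≤ C * ‖A‖ / (α - C) := by
    intro α hα
    obtain ⟨hbij, hpos⟩ := hres α ((le_max_left _ _).trans_lt hα)
    obtain ⟨B, ⟨hBs, hB⟩, -⟩ := hbij A (isHermitian_iff_isSymm.1 hA.1)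
    have hαC : 0 < α - C := sub_pos.2 ((le_max_right _ _).trans_lt hα)
    refine ⟨B, ?_, ?_⟩
    · have hLB : v ⬝ᵥ L B *ᵥ v = α * (v ⬝ᵥ B *ᵥ v) := by
        have hquad := congrArg (fun M => v ⬝ᵥ M *ᵥ v) hB
        simp only [sub_mulVec, smul_mulVec, dotProduct_sub, dotProduct_smul, smul_eq_mul, hv,
          dotProduct_zero] at hquad
        linarith
      rw [L.map_smul, smul_mulVec, dotProduct_smul, smul_eq_mul, hLB, ← mul_assoc]
      exact mul_nonneg (mul_self_nonneg α)
        (by simpa using (hpos B A hBs hB hA).dotProduct_mulVec_nonneg v)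
    · have hsub : α • B - A = L B := by rw [← hB]; abel
      have hBnorm : (α - C) * ‖B‖ ≤ ‖A‖ := by
        have htri := norm_add_le A (L B)
        rw [← sub_eq_iff_eq_add'.1 hsub, norm_smul, Real.norm_of_nonneg (by linarith)] at htri
        linarith [hLC B]
      rw [hsub, le_div_iff₀ hαC]
      calc ‖L B‖ * (α - C) ≤ C * ‖B‖ * (α - C) := mul_le_mul_of_nonneg_right (hLC B) hαC.le
        _ = C * ((α - C) * ‖B‖) := by ring
        _ ≤ C * ‖A‖ := mul_le_mul_of_nonneg_left hBnorm hC.le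
  have hclosed : IsClosed {M : Matrix (Fin n) (Fin n) ℝ | 0 ≤ v ⬝ᵥ L M *ᵥ v} :=
    isClosed_le continuous_const (continuous_const.dotProduct
      (L.continuous_of_finiteDimensional.matrix_mulVec continuous_const))
  refine hclosed.closure_subset (Metric.mem_closure_iff.2 fun δ hδ => ?_)
  have hlim : Tendsto (fun α => C * ‖A‖ / (α - C)) atTop (𝓝 0) :=
    tendsto_const_nhds.div_atTop (tendsto_atTop_add_const_right _ _ tendsto_id)
  obtain ⟨α, hα, hαδ⟩ :=
    ((eventually_gt_atTop (max α₀ C)).and (hlim.eventually (gt_mem_nhds hδ))).exists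
  obtain ⟨B, hBpos, hBA⟩ := happrox α hα
  exact ⟨α • B, hBpos, by rw [dist_comm, dist_eq_norm]; linarith⟩

end ResolventPositive

theorem gronwall_matrix_comparison_general {n : ℕ}
    (L : Matrix (Fin n) (Fin n) ℝ →ₗ[ℝ] Matrix (Fin n) (Fin n) ℝ)
    (hLres : ResolventPositive (fun M => L M))
    (T : ℝ)
    (X Z X' Z' : ℝ → Matrix (Fin n) (Fin n) ℝ)
    (hXsymm : ∀ t ∈ Icc (0 : ℝ) T, (X t).IsSymm)
    (hZsymm : ∀ t ∈ Icc (0 : ℝ) T, (Z t).IsSymm)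
    (hXderiv : ∀ t ∈ Icc (0 : ℝ) T, ∀ i j,
      HasDerivWithinAt (fun s => X s i j) (X' t i j) (Icc (0 : ℝ) T) t)
    (hZderiv : ∀ t ∈ Icc (0 : ℝ) T, ∀ i j,
      HasDerivWithinAt (fun s => Z s i j) (Z' t i j) (Icc (0 : ℝ) T) t)
    (hXineq : ∀ t ∈ Icc (0 : ℝ) T, (L (X t) - X' t).PosSemidef)
    (hZeq : ∀ t ∈ Icc (0 : ℝ) T, Z' t = L (Z t))
    (h0 : (Z 0 - X 0).PosSemidef) :
    ∀ t ∈ Icc (0 : ℝ) T, (Z t - X t).PosSemidef := by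
  obtain ⟨K, hK⟩ := exists_dotProduct_mulVec_lt (L 1)
  have hperturbed (ε : ℝ) (hε : 0 < ε) : ∀ t ∈ Icc (0 : ℝ) T,
      (Z t - X t + (ε * Real.exp (K * t)) • 1).PosDef := by
    have hexp (t : ℝ) :
        HasDerivAt (fun s => ε * Real.exp (K * s)) (ε * (Real.exp (K * t) * K)) t := by
      simpa using ((hasDerivAt_id t).const_mul K).exp.const_mul ε
    refine posDef_Icc_of_deriv_pos_on_ker
      (W' := fun t => Z' t - X' t + (ε * (Real.exp (K * t) * K)) • 1)
      (fun t ht => ((hZsymm t ht).sub (hXsymm t ht)).add (isSymm_one.smul _))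
      (fun t ht => ((hasDerivWithinAt_iff_apply.2 (hZderiv t ht)).sub
        (hasDerivWithinAt_iff_apply.2 (hXderiv t ht))).add
        ((hexp t).hasDerivWithinAt.smul_const (1 : Matrix (Fin n) (Fin n) ℝ)))
      (by simpa using PosDef.posSemidef_add h0 (PosDef.one.smul hε)) ?_
    intro t ht hpsd v hv hWv
    set c := ε * Real.exp (K * t)
    have hsplit : Z' t - X' t + (ε * (Real.exp (K * t) * K)) • 1
        = L (Z t - X t + c • 1) + (L (X t) - X' t) + c • (K • 1 - L 1) := by
      rw [hZeq t ht, map_add, map_sub, map_smul]; module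
    have hLW := hLres.dotProduct_mulVec_nonneg_of_mulVec_eq_zero hpsd hWv
    have hXv : 0 ≤ v ⬝ᵥ (L (X t) - X' t) *ᵥ v := by
      simpa using (hXineq t ht).dotProduct_mulVec_nonneg v
    have hc : 0 < c := by positivity
    rw [hsplit]
    simp only [add_mulVec, sub_mulVec, smul_mulVec, one_mulVec, dotProduct_add, dotProduct_sub,
      dotProduct_smul, smul_eq_mul] at hXv ⊢
    nlinarith [hK v hv]
  intro t ht
  refine posSemidef_of_forall_posDef_add_smul (N := Real.exp (K * t) • 1) fun ε hε => ?_
  rw [← mul_smul]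
  exact hperturbed ε hε t ht

/-- Matrix Gronwall comparison lemma: if `X' ≤ L(X)`, `Z' = L(Z)`, both trajectories consist
of positive semidefinite symmetric matrices, and `X 0 ≤ Z 0`, then `X t ≤ Z t` on `[0, T]`. -/
theorem gronwall_matrix_comparison {n : ℕ}
    (L : Matrix (Fin n) (Fin n) ℝ →ₗ[ℝ] Matrix (Fin n) (Fin n) ℝ)
    (hLsymm : ∀ M : Matrix (Fin n) (Fin n) ℝ, M.IsSymm → (L M).IsSymm)
    (hLres : ResolventPositive (fun M => L M))
    (T : ℝ) (hT : 0 < T)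
    (X Z X' Z' : ℝ → Matrix (Fin n) (Fin n) ℝ)
    (hXsymm : ∀ t ∈ Icc (0 : ℝ) T, (X t).IsSymm)
    (hZsymm : ∀ t ∈ Icc (0 : ℝ) T, (Z t).IsSymm)
    (hXderiv : ∀ t ∈ Icc (0 : ℝ) T, ∀ i j,
      HasDerivWithinAt (fun s => X s i j) (X' t i j) (Icc (0 : ℝ) T) t)
    (hZderiv : ∀ t ∈ Icc (0 : ℝ) T, ∀ i j,
      HasDerivWithinAt (fun s => Z s i j) (Z' t i j) (Icc (0 : ℝ) T) t)
    (hXpos : ∀ t ∈ Icc (0 : ℝ) T, (X t).PosSemidef)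
    (hZpos : ∀ t ∈ Icc (0 : ℝ) T, (Z t).PosSemidef)
    (hXineq : ∀ t ∈ Icc (0 : ℝ) T, (L (X t) - X' t).PosSemidef)
    (hZeq : ∀ t ∈ Icc (0 : ℝ) T, Z' t = L (Z t))
    (h0 : (Z 0 - X 0).PosSemidef) :
    ∀ t ∈ Icc (0 : ℝ) T, (Z t - X t).PosSemidef :=
  gronwall_matrix_comparison_general L hLres T X Z X' Z' hXsymm hZsymm hXderiv hZderiv hXineq hZeq
    h0
end

section
/- Let L be a resolvent positive linear operator on the space of real symmetric n×n matrices, and let T > 0. Suppose Y : [0,T] → (symmetric n×n real matrices) is differentiable, Y(0) is positive semidefinite, and for every t ∈ [0,T] the matrix Y'(t) − L(Y(t)) is positive semidefinite. Then Y(t) is positive semidefinite for every t ∈ [0,T]. -/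
open Matrix Set

/-!
Resolvent positivity makes `L` quasimonotone on the positive semidefinite cone: if `X ⪰ 0` and
`vᵀ X v = 0`, then `vᵀ L(X) v ≥ 0`. Indeed `X_α := α (α - L)⁻¹ X ⪰ 0` satisfies
`L X_α = α (X_α - X)`, so `vᵀ L(X_α) v = α vᵀ X_α v ≥ 0`, and `X_α → X` as `α → ∞`.

For `ε > 0` and `K` with `vᵀ L(1) v ≤ K |v|²`, the matrix `Z = Y + ε e^{(K+1)t} 1` is positive
definite at `t = 0`. At a first time `t₀` where it fails to be, `Z(t₀) ⪰ 0` and `vᵀ Z(t₀) v = 0`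
for some `v ≠ 0`, and quasimonotonicity gives `d/dt vᵀ Z v > 0` at `t₀`; but this form decreases
to `0` from the left. Letting `ε → 0` gives `Y(t) ⪰ 0`.
-/

open Filter Topology

section QuadraticForm

variable {ι : Type*} [Fintype ι]

lemma dotProduct_mulVec_le_sum_abs_mul (A : Matrix ι ι ℝ) (v : ι → ℝ) :
    v ⬝ᵥ A *ᵥ v ≤ (∑ i, ∑ j, |A i j|) * (v ⬝ᵥ v) := by
  have hcoord : ∀ i, v i * v i ≤ v ⬝ᵥ v := fun i =>
    Finset.single_le_sum (f := fun j => v j * v j) (fun j _ => mul_self_nonneg _)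
      (Finset.mem_univ i)
  have hpair : ∀ i j, |v i * v j| ≤ v ⬝ᵥ v := fun i j => by
    rw [abs_mul]
    nlinarith [hcoord i, hcoord j, abs_mul_abs_self (v i), abs_mul_abs_self (v j),
      sq_nonneg (|v i| - |v j|)]
  calc v ⬝ᵥ A *ᵥ v = ∑ i, ∑ j, A i j * (v i * v j) := by
        simp only [dotProduct, mulVec, Finset.mul_sum]
        exact Finset.sum_congr rfl fun i _ => Finset.sum_congr rfl fun j _ => by ring
    _ ≤ ∑ i, ∑ j, |A i j| * (v ⬝ᵥ v) := by
        refine Finset.sum_le_sum fun i _ => Finset.sum_le_sum fun j _ => ?_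
        calc A i j * (v i * v j) ≤ |A i j * (v i * v j)| := le_abs_self _
          _ = |A i j| * |v i * v j| := abs_mul _ _
          _ ≤ |A i j| * (v ⬝ᵥ v) := mul_le_mul_of_nonneg_left (hpair i j) (abs_nonneg _)
    _ = (∑ i, ∑ j, |A i j|) * (v ⬝ᵥ v) := by simp only [Finset.sum_mul]

lemma dotProduct_self_pos {v : ι → ℝ} (hv : v ≠ 0) : 0 < v ⬝ᵥ v :=
  lt_of_le_of_ne' (Fintype.sum_nonneg fun i => mul_self_nonneg (v i))
    (mt dotProduct_self_eq_zero.1 hv)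

lemma dotProduct_mulVec_add_smul_one [DecidableEq ι] (M : Matrix ι ι ℝ) (c : ℝ) (v : ι → ℝ) :
    v ⬝ᵥ (M + c • 1) *ᵥ v = v ⬝ᵥ M *ᵥ v + c * (v ⬝ᵥ v) := by
  rw [add_mulVec, smul_mulVec, one_mulVec, dotProduct_add, dotProduct_smul, smul_eq_mul]

lemma exists_mem_sphere_dotProduct_mulVec_nonpos_iff (M : Matrix ι ι ℝ) :
    (∃ v ∈ Metric.sphere (0 : ι → ℝ) 1, v ⬝ᵥ M *ᵥ v ≤ 0) ↔ ∃ v ≠ 0, v ⬝ᵥ M *ᵥ v ≤ 0 := by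
  constructor
  · rintro ⟨v, hv, hle⟩
    exact ⟨v, ne_zero_of_mem_unit_sphere ⟨v, hv⟩, hle⟩
  · rintro ⟨v, hv, hle⟩
    refine ⟨‖v‖⁻¹ • v, by simp [norm_smul, hv], ?_⟩
    rw [mulVec_smul, dotProduct_smul, smul_dotProduct, smul_eq_mul, smul_eq_mul]
    exact mul_nonpos_of_nonneg_of_nonpos (inv_nonneg.2 (norm_nonneg v))
      (mul_nonpos_of_nonneg_of_nonpos (inv_nonneg.2 (norm_nonneg v)) hle)

lemma HasDerivWithinAt.dotProduct_mulVec_s1 {Z : ℝ → Matrix ι ι ℝ} {D : Matrix ι ι ℝ}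
    {s : Set ℝ} {t : ℝ} (hZ : ∀ i j, HasDerivWithinAt (fun s => Z s i j) (D i j) s t)
    (v : ι → ℝ) : HasDerivWithinAt (fun s => v ⬝ᵥ Z s *ᵥ v) (v ⬝ᵥ D *ᵥ v) s t :=
  HasDerivWithinAt.fun_sum fun i _ =>
    (HasDerivWithinAt.fun_sum fun j _ => (hZ i j).mul_const (v j)).const_mul (v i)

end QuadraticForm

lemma HasDerivWithinAt.nonpos_of_le_on_left {f : ℝ → ℝ} {f' a b : ℝ} {s : Set ℝ}
    (hf : HasDerivWithinAt f f' s b) (hab : a < b) (hs : Ioo a b ⊆ s)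
    (hle : ∀ x ∈ Ioo a b, f b ≤ f x) : f' ≤ 0 := by
  have hslope : Tendsto (slope f b) (𝓝[<] b) (𝓝 f') := by
    rw [← nhdsWithin_Ioo_eq_nhdsLT hab]
    exact (hasDerivWithinAt_iff_tendsto_slope.1 hf).mono_left
      (nhdsWithin_mono _ fun x hx => ⟨hs hx, hx.2.ne⟩)
  refine le_of_tendsto hslope ?_
  rw [← nhdsWithin_Ioo_eq_nhdsLT hab]
  filter_upwards [self_mem_nhdsWithin] with x hx
  rw [slope_def_field]
  exact div_nonpos_of_nonneg_of_nonpos (sub_nonneg.2 (hle x hx)) (sub_nonpos.2 hx.2.le)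

section Barrier

variable {ι : Type*} [Fintype ι] {Z Z' : ℝ → Matrix ι ι ℝ} {a b : ℝ}

lemma ContinuousOn.exists_first_dotProduct_mulVec_nonpos (hZ : ContinuousOn Z (Icc a b))
    (hbad : ∃ t ∈ Icc a b, ∃ v ≠ 0, v ⬝ᵥ Z t *ᵥ v ≤ 0) :
    ∃ t₀ ∈ Icc a b, (∃ v ≠ 0, v ⬝ᵥ Z t₀ *ᵥ v ≤ 0) ∧
      ∀ t ∈ Ico a t₀, ∀ v ≠ 0, 0 < v ⬝ᵥ Z t *ᵥ v := by
  set S := {t ∈ Icc a b | ∃ v ∈ Metric.sphere (0 : ι → ℝ) 1, v ⬝ᵥ Z t *ᵥ v ≤ 0}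
  have hquad : ContinuousOn (fun p : ℝ × (ι → ℝ) => p.2 ⬝ᵥ Z p.1 *ᵥ p.2) (Icc a b ×ˢ univ) :=
    (continuous_snd.dotProduct (continuous_fst.matrix_mulVec continuous_snd)).comp_continuousOn
      ((hZ.comp continuousOn_fst fun _ hp => hp.1).prodMk continuousOn_snd)
  have hS : S = Prod.fst '' ((Icc a b ×ˢ Metric.sphere 0 1) ∩
      (fun p : ℝ × (ι → ℝ) => p.2 ⬝ᵥ Z p.1 *ᵥ p.2) ⁻¹' Iic 0) := by
    ext t
    simp [S, and_assoc]
  have hScompact : IsCompact S := by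
    rw [hS]
    refine IsCompact.image ?_ continuous_fst
    refine (isCompact_Icc.prod (isCompact_sphere 0 1)).of_isClosed_subset ?_ inter_subset_left
    exact (hquad.mono (prod_mono_right (subset_univ _))).preimage_isClosed_of_isClosed
      (isClosed_Icc.prod Metric.isClosed_sphere) isClosed_Iic
  have hSne : S.Nonempty := by
    obtain ⟨t, ht, hv⟩ := hbad
    exact ⟨t, ht, (exists_mem_sphere_dotProduct_mulVec_nonpos_iff _).2 hv⟩
  obtain ⟨t₀, ⟨ht₀, hv⟩, hleast⟩ := hScompact.exists_isLeast hSne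
  refine ⟨t₀, ht₀, (exists_mem_sphere_dotProduct_mulVec_nonpos_iff _).1 hv, ?_⟩
  intro t ht v hv
  by_contra! hle
  have htS : t ∈ S := ⟨⟨ht.1, ht.2.le.trans ht₀.2⟩,
    (exists_mem_sphere_dotProduct_mulVec_nonpos_iff _).2 ⟨v, hv, hle⟩⟩
  exact (hleast htS).not_gt ht.2

theorem dotProduct_mulVec_pos_of_deriv_pos_at_contact
    (hZ : ∀ t ∈ Icc a b, ∀ i j, HasDerivWithinAt (fun s => Z s i j) (Z' t i j) (Icc a b) t)
    (ha : ∀ v ≠ 0, 0 < v ⬝ᵥ Z a *ᵥ v)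
    (hcontact : ∀ t ∈ Ioc a b, ∀ v ≠ 0, (∀ w, 0 ≤ w ⬝ᵥ Z t *ᵥ w) →
      v ⬝ᵥ Z t *ᵥ v = 0 → 0 < v ⬝ᵥ Z' t *ᵥ v) :
    ∀ t ∈ Icc a b, ∀ v ≠ 0, 0 < v ⬝ᵥ Z t *ᵥ v := by
  by_contra! hbad
  have hcont : ContinuousOn Z (Icc a b) := continuousOn_pi.2 fun i => continuousOn_pi.2
    fun j t ht => (hZ t ht i j).continuousWithinAt
  obtain ⟨t₀, ht₀, ⟨v, hv, hv_nonpos⟩, hbefore⟩ := hcont.exists_first_dotProduct_mulVec_nonpos hbad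
  have hderiv := HasDerivWithinAt.dotProduct_mulVec_s1 (hZ t₀ ht₀)
  have hat₀ : a < t₀ := ht₀.1.lt_of_ne fun h => (ha v hv).not_ge (h ▸ hv_nonpos)
  have hIoo : Ioo a t₀ ⊆ Icc a b := fun s hs => ⟨hs.1.le, hs.2.le.trans ht₀.2⟩
  -- `Z t₀` is a limit of positive definite matrices
  have hnonneg : ∀ w, 0 ≤ w ⬝ᵥ Z t₀ *ᵥ w := by
    intro w
    rcases eq_or_ne w 0 with rfl | hw
    · simp
    have hlim : Tendsto (fun s => w ⬝ᵥ Z s *ᵥ w) (𝓝[<] t₀) (𝓝 (w ⬝ᵥ Z t₀ *ᵥ w)) := by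
      rw [← nhdsWithin_Ioo_eq_nhdsLT hat₀]
      exact ((hderiv w).continuousWithinAt.mono hIoo).tendsto
    refine ge_of_tendsto hlim ?_
    rw [← nhdsWithin_Ioo_eq_nhdsLT hat₀]
    filter_upwards [self_mem_nhdsWithin] with s hs using (hbefore s ⟨hs.1.le, hs.2⟩ w hw).le
  have hzero : v ⬝ᵥ Z t₀ *ᵥ v = 0 := le_antisymm hv_nonpos (hnonneg v)
  refine (hcontact t₀ ⟨hat₀, ht₀.2⟩ v hv hnonneg hzero).not_ge
    ((hderiv v).nonpos_of_le_on_left hat₀ hIoo fun s hs => ?_)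
  rw [hzero]
  exact (hbefore s ⟨hs.1.le, hs.2⟩ v hv).le

end Barrier

lemma ContinuousLinearMap.tendsto_of_eventually_smul_sub_apply_eq {E : Type*}
    [SeminormedAddCommGroup E] [NormedSpace ℝ E] (L : E →L[ℝ] E) {x : E} {y : ℝ → E}
    (hy : ∀ᶠ α in atTop, α • y α - L (y α) = α • x) : Tendsto y atTop (𝓝 x) := by
  have hbound : ∀ᶠ α in atTop, ‖y α - x‖ ≤ 2 * ‖L‖ * ‖x‖ * α⁻¹ := by
    filter_upwards [hy, eventually_ge_atTop (2 * ‖L‖), eventually_gt_atTop 0]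
      with α hα hαL hαpos
    have hLy : α • (y α - x) = L (y α) := by rw [smul_sub, ← hα, sub_sub_cancel]
    have hnorm : α * ‖y α - x‖ ≤ ‖L‖ * (‖x‖ + ‖y α - x‖) :=
      calc α * ‖y α - x‖ = ‖L (y α)‖ := by rw [← hLy, norm_smul, Real.norm_of_nonneg hαpos.le]
        _ ≤ ‖L‖ * ‖y α‖ := L.le_opNorm _
        _ ≤ ‖L‖ * (‖x‖ + ‖y α - x‖) := by gcongr; exact norm_le_norm_add_norm_sub' _ _
    rw [le_mul_inv_iff₀ hαpos]
    nlinarith [norm_nonneg L, norm_nonneg (y α - x)]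
  rw [tendsto_iff_norm_sub_tendsto_zero]
  refine squeeze_zero' (Eventually.of_forall fun _ => norm_nonneg _) hbound ?_
  simpa using tendsto_inv_atTop_zero.const_mul (2 * ‖L‖ * ‖x‖)

section ResolventPositive

attribute [local instance] Matrix.normedAddCommGroup Matrix.normedSpace

variable {n : ℕ} {L : Matrix (Fin n) (Fin n) ℝ →ₗ[ℝ] Matrix (Fin n) (Fin n) ℝ}

theorem ResolventPositive.dotProduct_mulVec_apply_nonneg (hL : ResolventPositive (fun M => L M))
    {X : Matrix (Fin n) (Fin n) ℝ} (hX : X.PosSemidef) {v : Fin n → ℝ}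
    (hv : v ⬝ᵥ X *ᵥ v = 0) : 0 ≤ v ⬝ᵥ L X *ᵥ v := by
  obtain ⟨α₀, hα₀⟩ := hL
  have hXsymm : X.IsSymm := isHermitian_iff_isSymm.1 hX.isHermitian
  have hsolve : ∀ α, ∃ Xα : Matrix (Fin n) (Fin n) ℝ, α₀ < α →
      Xα.IsSymm ∧ α • Xα - L Xα = α • X := by
    intro α
    by_cases hα : α₀ < α
    · obtain ⟨Xα, hXα, -⟩ := (hα₀ α hα).1 _ (hXsymm.smul α)
      exact ⟨Xα, fun _ => hXα⟩
    · exact ⟨0, fun h => absurd h hα⟩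
  choose R hR using hsolve
  have hR_tendsto : Tendsto R atTop (𝓝 X) :=
    (LinearMap.toContinuousLinearMap L).tendsto_of_eventually_smul_sub_apply_eq
      ((eventually_gt_atTop α₀).mono fun α hα => (hR α hα).2)
  have hlim : Tendsto (fun α => v ⬝ᵥ L (R α) *ᵥ v) atTop (𝓝 (v ⬝ᵥ L X *ᵥ v)) :=
    ((continuous_const.dotProduct
      (L.continuous_of_finiteDimensional.matrix_mulVec continuous_const)).tendsto X).comp
      hR_tendsto
  refine ge_of_tendsto hlim ?_
  filter_upwards [eventually_gt_atTop α₀, eventually_gt_atTop 0] with α hα hαpos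
  obtain ⟨hRsymm, hReq⟩ := hR α hα
  have hRpsd : (R α).PosSemidef := (hα₀ α hα).2 _ _ hRsymm hReq (hX.smul hαpos.le)
  have hLR : L (R α) = α • (R α - X) := by rw [smul_sub, ← hReq, sub_sub_cancel]
  rw [hLR, smul_mulVec, dotProduct_smul, sub_mulVec, dotProduct_sub, hv, sub_zero, smul_eq_mul]
  exact mul_nonneg hαpos.le (by simpa using hRpsd.dotProduct_mulVec_nonneg v)

end ResolventPositive

theorem dotProduct_mulVec_add_exp_pos_of_resolventPositive {n : ℕ}
    {L : Matrix (Fin n) (Fin n) ℝ →ₗ[ℝ] Matrix (Fin n) (Fin n) ℝ}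
    (hLres : ResolventPositive (fun M => L M)) {K : ℝ}
    (hK : ∀ v, v ⬝ᵥ L 1 *ᵥ v ≤ K * (v ⬝ᵥ v)) {T : ℝ} {Y Y' : ℝ → Matrix (Fin n) (Fin n) ℝ}
    (hYsymm : ∀ t ∈ Icc (0 : ℝ) T, (Y t).IsSymm)
    (hYderiv : ∀ t ∈ Icc (0 : ℝ) T, ∀ i j,
      HasDerivWithinAt (fun s => Y s i j) (Y' t i j) (Icc (0 : ℝ) T) t)
    (h0 : (Y 0).PosSemidef) (hineq : ∀ t ∈ Icc (0 : ℝ) T, (Y' t - L (Y t)).PosSemidef)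
    {ε : ℝ} (hε : 0 < ε) :
    ∀ t ∈ Icc (0 : ℝ) T, ∀ v ≠ 0, 0 < v ⬝ᵥ Y t *ᵥ v + ε * Real.exp ((K + 1) * t) * (v ⬝ᵥ v) := by
  set c : ℝ → ℝ := fun s => ε * Real.exp ((K + 1) * s)
  have hc_pos : ∀ s, 0 < c s := fun s => by positivity
  have hc_deriv : ∀ s, HasDerivAt c ((K + 1) * c s) s := fun s => by
    simpa [c, mul_comm, mul_left_comm] using ((hasDerivAt_id s).const_mul (K + 1)).exp.const_mul ε
  have key := dotProduct_mulVec_pos_of_deriv_pos_at_contact (a := 0) (b := T)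
    (Z := fun s => Y s + c s • 1) (Z' := fun t => Y' t + ((K + 1) * c t) • 1) ?_ ?_ ?_
  · intro t ht v hv
    simpa only [dotProduct_mulVec_add_smul_one] using key t ht v hv
  · intro t ht i j
    exact (hYderiv t ht i j).add ((hc_deriv t).hasDerivWithinAt.mul_const _)
  · intro v hv
    rw [dotProduct_mulVec_add_smul_one]
    have hY0 := h0.dotProduct_mulVec_nonneg v
    rw [star_trivial] at hY0
    have := mul_pos (hc_pos 0) (dotProduct_self_pos hv)
    linarith
  · intro t ht v hv hnonneg hzero
    have hZpsd : (Y t + c t • 1).PosSemidef := .of_dotProduct_mulVec_nonneg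
      (isHermitian_iff_isSymm.2 ((hYsymm t (Ioc_subset_Icc_self ht)).add (isSymm_one.smul _)))
      (by simpa using hnonneg)
    have hLZ := hLres.dotProduct_mulVec_apply_nonneg hZpsd hzero
    rw [map_add, map_smul, add_mulVec, smul_mulVec, dotProduct_add, dotProduct_smul,
      smul_eq_mul] at hLZ
    have hY' : v ⬝ᵥ L (Y t) *ᵥ v ≤ v ⬝ᵥ Y' t *ᵥ v := by
      have := (hineq t (Ioc_subset_Icc_self ht)).dotProduct_mulVec_nonneg v
      rw [star_trivial, sub_mulVec, dotProduct_sub] at this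
      linarith
    have hL1 := mul_le_mul_of_nonneg_left (hK v) (hc_pos t).le
    have := mul_pos (hc_pos t) (dotProduct_self_pos hv)
    rw [dotProduct_mulVec_add_smul_one]
    nlinarith

theorem psd_propagation_of_resolvent_positive_general {n : ℕ}
    (L : Matrix (Fin n) (Fin n) ℝ →ₗ[ℝ] Matrix (Fin n) (Fin n) ℝ)
    (hLres : ResolventPositive (fun M => L M))
    (T : ℝ)
    (Y Y' : ℝ → Matrix (Fin n) (Fin n) ℝ)
    (hYsymm : ∀ t ∈ Icc (0 : ℝ) T, (Y t).IsSymm)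
    (hYderiv : ∀ t ∈ Icc (0 : ℝ) T, ∀ i j,
      HasDerivWithinAt (fun s => Y s i j) (Y' t i j) (Icc (0 : ℝ) T) t)
    (h0 : (Y 0).PosSemidef)
    (hineq : ∀ t ∈ Icc (0 : ℝ) T, (Y' t - L (Y t)).PosSemidef) :
    ∀ t ∈ Icc (0 : ℝ) T, (Y t).PosSemidef := by
  set K := ∑ i, ∑ j, |L 1 i j|
  have hpert := fun ε (hε : 0 < ε) => dotProduct_mulVec_add_exp_pos_of_resolventPositive hLres
    (K := K) (fun v => dotProduct_mulVec_le_sum_abs_mul _ v) hYsymm hYderiv h0 hineq hε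
  intro t ht
  refine .of_dotProduct_mulVec_nonneg (isHermitian_iff_isSymm.2 (hYsymm t ht)) fun v => ?_
  rcases eq_or_ne v 0 with rfl | hv
  · simp
  rw [star_trivial]
  set w := Real.exp ((K + 1) * t) * (v ⬝ᵥ v)
  have hw : 0 < w := mul_pos (Real.exp_pos _) (dotProduct_self_pos hv)
  refine le_of_forall_pos_lt_add fun δ hδ => ?_
  have := hpert (δ / w) (div_pos hδ hw) t ht v hv
  rw [mul_assoc, div_mul_cancel₀ _ hw.ne'] at this
  linarith

/-- If `Y(0)` is positive semidefinite and `Y'(t) - L(Y(t))` is positive semidefinite on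
`[0, T]` for a resolvent positive operator `L`, then `Y(t)` is positive semidefinite on
`[0, T]`. -/
theorem psd_propagation_of_resolvent_positive {n : ℕ}
    (L : Matrix (Fin n) (Fin n) ℝ →ₗ[ℝ] Matrix (Fin n) (Fin n) ℝ)
    (hLsymm : ∀ M : Matrix (Fin n) (Fin n) ℝ, M.IsSymm → (L M).IsSymm)
    (hLres : ResolventPositive (fun M => L M))
    (T : ℝ) (hT : 0 < T)
    (Y Y' : ℝ → Matrix (Fin n) (Fin n) ℝ)
    (hYsymm : ∀ t ∈ Icc (0 : ℝ) T, (Y t).IsSymm)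
    (hYderiv : ∀ t ∈ Icc (0 : ℝ) T, ∀ i j,
      HasDerivWithinAt (fun s => Y s i j) (Y' t i j) (Icc (0 : ℝ) T) t)
    (h0 : (Y 0).PosSemidef)
    (hineq : ∀ t ∈ Icc (0 : ℝ) T, (Y' t - L (Y t)).PosSemidef) :
    ∀ t ∈ Icc (0 : ℝ) T, (Y t).PosSemidef :=
  psd_propagation_of_resolvent_positive_general L hLres T Y Y' hYsymm hYderiv h0 hineq
end

section
/- For every real n×n matrix A, the linear operator L defined on real n×n matrices by L(X) := A X + X Aᵀ maps symmetric matrices to symmetric matrices and is resolvent positive. -/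
open Matrix

/-!
For `α > 2 ∑ᵢⱼ |Aᵢⱼ|` the operator `X ↦ α X - (A X + X Aᵀ)` is positive on symmetric matrices:
if `v` is a unit eigenvector of the symmetric matrix `X` with eigenvalue `μ`, then
`vᵀ (α X - A X - X Aᵀ) v = μ (α - 2 vᵀ A v)` and the bracket is positive, so `μ ≥ 0` as soon as
the left-hand side is. Applied to `X` and `-X`, positivity makes the operator injective on the
finite-dimensional space of symmetric matrices, hence bijective there.
-/

theorem LinearMap.existsUnique_mem_apply_eq {K V : Type*} [Field K] [AddCommGroup V] [Module K V]
    [FiniteDimensional K V] {f : V →ₗ[K] V} {p : Submodule K V} (hmaps : ∀ x ∈ p, f x ∈ p)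
    (hker : ∀ x ∈ p, f x = 0 → x = 0) {y : V} (hy : y ∈ p) : ∃! x, x ∈ p ∧ f x = y := by
  have hinj : Function.Injective (f.restrict hmaps) := (injective_iff_map_eq_zero _).mpr
    fun x hx => Subtype.ext (hker x x.2 (congrArg Subtype.val hx))
  obtain ⟨x, hx⟩ := LinearMap.injective_iff_surjective.mp hinj ⟨y, hy⟩
  have hfx : f x = y := congrArg Subtype.val hx
  refine ⟨x, ⟨x.2, hfx⟩, fun x' ⟨hx', hfx'⟩ => ?_⟩
  exact sub_eq_zero.mp (hker _ (p.sub_mem hx' x.2) (by rw [map_sub, hfx, hfx', sub_self]))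

namespace Matrix

def symmetricSubmodule (m R : Type*) [CommSemiring R] : Submodule R (Matrix m m R) where
  carrier := {X | X.IsSymm}
  add_mem' := IsSymm.add
  zero_mem' := isSymm_zero
  smul_mem' c _ hX := hX.smul c

variable {m R : Type*} [Fintype m]

section CommSemiring

variable [CommSemiring R]

def lyapunov (A : Matrix m m R) : Matrix m m R →ₗ[R] Matrix m m R :=
  LinearMap.mulLeft R A + LinearMap.mulRight R Aᵀ

@[simp]
theorem lyapunov_apply (A X : Matrix m m R) : lyapunov A X = A * X + X * Aᵀ := rfl

theorem IsSymm.lyapunov (A : Matrix m m R) {X : Matrix m m R} (hX : X.IsSymm) :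
    (A * X + X * Aᵀ).IsSymm := by
  rw [IsSymm, transpose_add, transpose_mul, transpose_mul, transpose_transpose, hX.eq, add_comm]

end CommSemiring

theorem dotProduct_smul_sub_lyapunov_mulVec [CommRing R] {A X : Matrix m m R} (hX : X.IsSymm)
    {v : m → R} {μ : R} (hXv : X *ᵥ v = μ • v) (α : R) :
    v ⬝ᵥ ((α • X - lyapunov A X) *ᵥ v) = μ * (α * (v ⬝ᵥ v) - 2 * (v ⬝ᵥ A *ᵥ v)) := by
  have hvX : v ᵥ* X = μ • v := by rw [← mulVec_transpose, hX.eq, hXv]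
  have hXA : v ⬝ᵥ (X * Aᵀ) *ᵥ v = μ * (v ⬝ᵥ A *ᵥ v) := by
    rw [← mulVec_mulVec, dotProduct_mulVec, hvX, smul_dotProduct, mulVec_transpose,
      dotProduct_comm, dotProduct_mulVec, smul_eq_mul]
  have hAX : v ⬝ᵥ (A * X) *ᵥ v = μ * (v ⬝ᵥ A *ᵥ v) := by
    rw [← mulVec_mulVec, hXv, mulVec_smul, dotProduct_smul, smul_eq_mul]
  rw [lyapunov_apply, sub_mulVec, add_mulVec, dotProduct_sub, dotProduct_add, hXA, hAX,
    smul_mulVec, hXv, dotProduct_smul, dotProduct_smul, smul_eq_mul, smul_eq_mul]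
  ring

theorem abs_dotProduct_mulVec_le_sum_abs {A : Matrix m m ℝ} {v : m → ℝ} (hv : v ⬝ᵥ v = 1) :
    |v ⬝ᵥ A *ᵥ v| ≤ ∑ i, ∑ j, |A i j| := by
  have hle : ∀ i, |v i| ≤ 1 := fun i => by
    rw [← sq_le_one_iff_abs_le_one]
    calc v i ^ 2 ≤ ∑ k, v k ^ 2 :=
          Finset.single_le_sum (fun k _ => sq_nonneg (v k)) (Finset.mem_univ i)
      _ = 1 := by simpa only [dotProduct, sq] using hv
  calc |v ⬝ᵥ A *ᵥ v| = |∑ i, ∑ j, v i * A i j * v j| := by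
        simp only [dotProduct, mulVec, Finset.mul_sum, mul_assoc]
    _ ≤ ∑ i, ∑ j, |v i * A i j * v j| :=
        (Finset.abs_sum_le_sum_abs _ _).trans
          (Finset.sum_le_sum fun i _ => Finset.abs_sum_le_sum_abs _ _)
    _ ≤ ∑ i, ∑ j, |A i j| := Finset.sum_le_sum fun i _ => Finset.sum_le_sum fun j _ => by
        rw [abs_mul, abs_mul]
        calc |v i| * |A i j| * |v j| ≤ 1 * |A i j| * 1 := by gcongr <;> exact hle _
          _ = |A i j| := by ring

theorem IsSymm.posSemidef_of_eigenvalue_nonneg {X : Matrix m m ℝ} (hX : X.IsSymm)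
    (h : ∀ (v : m → ℝ) (μ : ℝ), v ⬝ᵥ v = 1 → X *ᵥ v = μ • v → 0 ≤ μ) : X.PosSemidef := by
  classical
  have hXh : X.IsHermitian := isHermitian_iff_isSymm.mpr hX
  refine hXh.posSemidef_iff_eigenvalues_nonneg.mpr fun i =>
    h _ _ ?_ (by simpa using hXh.mulVec_eigenvectorBasis i)
  have h1 := inner_self_eq_one_of_norm_eq_one (𝕜 := ℝ) (hXh.eigenvectorBasis.orthonormal.1 i)
  rwa [EuclideanSpace.inner_eq_star_dotProduct, star_trivial] at h1

theorem posSemidef_of_posSemidef_sub_lyapunov {A X : Matrix m m ℝ} {α : ℝ}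
    (hα : 2 * ∑ i, ∑ j, |A i j| < α) (hX : X.IsSymm) (hY : (α • X - lyapunov A X).PosSemidef) :
    X.PosSemidef := by
  refine hX.posSemidef_of_eigenvalue_nonneg fun v μ hv hXv => ?_
  have hquad := hY.dotProduct_mulVec_nonneg v
  rw [star_trivial, dotProduct_smul_sub_lyapunov_mulVec hX hXv, hv, mul_one] at hquad
  have hA := (abs_le.mp (abs_dotProduct_mulVec_le_sum_abs (A := A) hv)).2
  exact (mul_nonneg_iff_of_pos_right (by linarith)).mp hquad

open scoped MatrixOrder in
theorem eq_zero_of_sub_lyapunov_eq_zero {A X : Matrix m m ℝ} {α : ℝ}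
    (hα : 2 * ∑ i, ∑ j, |A i j| < α) (hX : X.IsSymm) (h : α • X - lyapunov A X = 0) : X = 0 := by
  have h_neg : α • -X - lyapunov A (-X) = 0 := by
    rw [map_neg, smul_neg, neg_sub_neg, ← neg_sub, h, neg_zero]
  have hX_nonneg : 0 ≤ X := nonneg_iff_posSemidef.mpr <|
    posSemidef_of_posSemidef_sub_lyapunov hα hX (h ▸ PosSemidef.zero)
  have hX_nonpos : 0 ≤ -X := nonneg_iff_posSemidef.mpr <|
    posSemidef_of_posSemidef_sub_lyapunov hα hX.neg (h_neg ▸ PosSemidef.zero)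
  exact le_antisymm (neg_nonneg.mp hX_nonpos) hX_nonneg

end Matrix

/-- For any real `n × n` matrix `A`, the Lyapunov operator `X ↦ A X + X Aᵀ` maps symmetric
matrices to symmetric matrices and is resolvent positive. -/
theorem lyapunov_operator_resolventPositive {n : ℕ} (A : Matrix (Fin n) (Fin n) ℝ) :
    (∀ X : Matrix (Fin n) (Fin n) ℝ, X.IsSymm → (A * X + X * Aᵀ).IsSymm) ∧
    ResolventPositive (fun X : Matrix (Fin n) (Fin n) ℝ => A * X + X * Aᵀ) := by
  refine ⟨fun X hX => hX.lyapunov A, 2 * ∑ i, ∑ j, |A i j|, fun α hα =>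
    ⟨fun Y hY => ?_, fun X Y hX hXY hY => posSemidef_of_posSemidef_sub_lyapunov hα hX (hXY ▸ hY)⟩⟩
  exact LinearMap.existsUnique_mem_apply_eq (p := symmetricSubmodule (Fin n) ℝ)
    (f := α • LinearMap.id - lyapunov A) (fun X hX => (hX.smul α).sub (hX.lyapunov A))
    (fun X hX => eq_zero_of_sub_lyapunov_eq_zero hα hX) hY
end

section
/- Let P and Q be symmetric positive definite real n×n matrices. Then there exist an invertible real n×n matrix S and a diagonal real n×n matrix D with strictly positive diagonal entries such that S P Sᵀ = D, (S⁻¹)ᵀ Q S⁻¹ = D, and D² = S (P Q) S⁻¹. In particular, the diagonal entries of D are the square roots of the eigenvalues of P Q, which are all real and positive. -/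
/-!
Factor `P = L Lᴴ` with `L` invertible. The change of coordinates `L⁻¹` turns the pair `(P, Q)` into
`(1, Lᴴ Q L)`; a unitary `U` diagonalises the positive definite `Lᴴ Q L` as `Λ` without disturbing
`1`; the diagonal scaling `Λ^(1/4)` then turns `(1, Λ)` into `(Λ^(1/2), Λ^(1/2))`. The action
`(P, Q) ↦ (S P Sᴴ, S⁻ᴴ Q S⁻¹)` composes, so `S = Λ^(1/4) Uᴴ L⁻¹` balances `(P, Q)`, and
`D² = S P Sᴴ S⁻ᴴ Q S⁻¹ = S P Q S⁻¹`.
-/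

open Matrix

namespace Matrix

variable {ι : Type*} [Fintype ι] [DecidableEq ι]

section CommRing

variable {R : Type*} [CommRing R] [StarRing R]

noncomputable def contragredient (S : Matrix ι ι R) (PQ : Matrix ι ι R × Matrix ι ι R) :
    Matrix ι ι R × Matrix ι ι R :=
  (S * PQ.1 * Sᴴ, S⁻¹ᴴ * PQ.2 * S⁻¹)

theorem contragredient_mul (S T : Matrix ι ι R) (PQ : Matrix ι ι R × Matrix ι ι R) :
    contragredient (S * T) PQ = contragredient S (contragredient T PQ) := by
  simp only [contragredient, conjTranspose_mul, mul_inv_rev, Matrix.mul_assoc]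

theorem contragredient_fst_mul_snd {S : Matrix ι ι R} (hS : IsUnit S)
    (PQ : Matrix ι ι R × Matrix ι ι R) :
    (contragredient S PQ).1 * (contragredient S PQ).2 = S * (PQ.1 * PQ.2) * S⁻¹ := by
  have hSS : Sᴴ * S⁻¹ᴴ = 1 := by
    rw [← conjTranspose_mul, nonsing_inv_mul S ((isUnit_iff_isUnit_det S).mp hS),
      conjTranspose_one]
  calc S * PQ.1 * Sᴴ * (S⁻¹ᴴ * PQ.2 * S⁻¹) = S * PQ.1 * (Sᴴ * S⁻¹ᴴ) * PQ.2 * S⁻¹ := by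
        simp only [Matrix.mul_assoc]
    _ = S * (PQ.1 * PQ.2) * S⁻¹ := by rw [hSS, Matrix.mul_one, Matrix.mul_assoc S]

theorem contragredient_inv_mul_conjTranspose {L : Matrix ι ι R} (hL : IsUnit L)
    (Q : Matrix ι ι R) : contragredient L⁻¹ (L * Lᴴ, Q) = (1, Lᴴ * Q * L) := by
  have hL' := (isUnit_iff_isUnit_det L).mp hL
  have hLL : Lᴴ * L⁻¹ᴴ = 1 := by
    rw [← conjTranspose_mul, nonsing_inv_mul L hL', conjTranspose_one]
  simp only [contragredient, nonsing_inv_nonsing_inv L hL', Prod.mk.injEq, and_true]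
  rw [Matrix.mul_assoc, Matrix.mul_assoc, hLL, Matrix.mul_one, nonsing_inv_mul L hL']

theorem contragredient_star_of_mem_unitaryGroup {U : Matrix ι ι R} (hU : U ∈ unitaryGroup ι R)
    (PQ : Matrix ι ι R × Matrix ι ι R) :
    contragredient (star U) PQ = (star U * PQ.1 * U, star U * PQ.2 * U) := by
  have hinv : (star U)⁻¹ = U := inv_eq_left_inv (Unitary.mul_star_self_of_mem hU)
  simp only [contragredient, hinv, ← star_eq_conjTranspose, star_star]

end CommRing

section RCLike

open scoped ComplexOrder

variable {𝕜 : Type*} [RCLike 𝕜]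

theorem contragredient_diagonal_sqrt_sqrt {μ : ι → ℝ} (hμ : ∀ i, 0 < μ i) :
    contragredient (diagonal fun i ↦ (√√(μ i) : 𝕜)) (1, diagonal fun i ↦ (μ i : 𝕜)) =
      (diagonal fun i ↦ (√(μ i) : 𝕜), diagonal fun i ↦ (√(μ i) : 𝕜)) := by
  have hc : ∀ i, √√(μ i) * √√(μ i) = √(μ i) := fun i ↦ Real.mul_self_sqrt (Real.sqrt_nonneg _)
  have hc₀ : ∀ i, √√(μ i) ≠ 0 := fun i ↦ (Real.sqrt_pos.2 (Real.sqrt_pos.2 (hμ i))).ne'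
  have hinv : (diagonal fun i ↦ (√√(μ i) : 𝕜))⁻¹ = diagonal fun i ↦ (((√√(μ i))⁻¹ : ℝ) : 𝕜) := by
    refine inv_eq_left_inv ?_
    simp [diagonal_mul_diagonal, hc₀]
  have hμc : ∀ i, (√√(μ i))⁻¹ * μ i * (√√(μ i))⁻¹ = √(μ i) := fun i ↦ by
    calc (√√(μ i))⁻¹ * μ i * (√√(μ i))⁻¹ = μ i / (√√(μ i) * √√(μ i)) := by ring
      _ = √(μ i) := by rw [hc, Real.div_sqrt]
  simp only [contragredient, hinv, diagonal_conjTranspose, Matrix.mul_one, diagonal_mul_diagonal,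
    Pi.star_def, RCLike.star_def, RCLike.conj_ofReal, ← RCLike.ofReal_mul, hc, hμc]

open scoped MatrixOrder Matrix.Norms.L2Operator in
theorem PosDef.exists_isUnit_eq_mul_conjTranspose {P : Matrix ι ι 𝕜} (hP : P.PosDef) :
    ∃ L, IsUnit L ∧ P = L * Lᴴ :=
  CStarAlgebra.isStrictlyPositive_iff_eq_mul_star_self.mp hP.isStrictlyPositive

theorem PosDef.exists_star_mul_mul_eq_diagonal {A : Matrix ι ι 𝕜} (hA : A.PosDef) :
    ∃ U ∈ unitaryGroup ι 𝕜, ∃ μ : ι → ℝ, (∀ i, 0 < μ i) ∧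
      star U * A * U = diagonal fun i ↦ (μ i : 𝕜) :=
  ⟨_, hA.1.eigenvectorUnitary.2, _, hA.eigenvalues_pos, by
    simpa [Function.comp_def] using hA.1.conjStarAlgAut_star_eigenvectorUnitary⟩

theorem PosDef.exists_contragredient_eq_diagonal {P Q : Matrix ι ι 𝕜} (hP : P.PosDef)
    (hQ : Q.PosDef) :
    ∃ (S : Matrix ι ι 𝕜) (σ : ι → ℝ), IsUnit S ∧ (∀ i, 0 < σ i) ∧
      contragredient S (P, Q) = (diagonal fun i ↦ (σ i : 𝕜), diagonal fun i ↦ (σ i : 𝕜)) := by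
  obtain ⟨L, hL, rfl⟩ := hP.exists_isUnit_eq_mul_conjTranspose
  have hQ' : (Lᴴ * Q * L).PosDef :=
    hQ.conjTranspose_mul_mul_same (mulVec_injective_iff_isUnit.mpr hL)
  obtain ⟨U, hU, μ, hμ, hUQ⟩ := hQ'.exists_star_mul_mul_eq_diagonal
  refine ⟨diagonal (fun i ↦ (√√(μ i) : 𝕜)) * star U * L⁻¹, fun i ↦ √(μ i),
    ?_, fun i ↦ Real.sqrt_pos.2 (hμ i), ?_⟩
  · simp [isUnit_diagonal, Pi.isUnit_iff, isUnit_nonsing_inv_iff, hL,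
      Unitary.isUnit_coe (U := ⟨U, hU⟩), fun i ↦ (Real.sqrt_pos.2 (hμ i)).ne']
  · rw [contragredient_mul, contragredient_mul, contragredient_inv_mul_conjTranspose hL,
      contragredient_star_of_mem_unitaryGroup hU, hUQ, Matrix.mul_one,
      Unitary.star_mul_self_of_mem hU, contragredient_diagonal_sqrt_sqrt hμ]

end RCLike

end Matrix

/-- Existence of a balancing transformation: for symmetric positive definite `P` and `Q`
there are an invertible matrix `S` and a diagonal matrix `D` with strictly positive diagonal
entries such that `S P Sᵀ = D`, `S⁻ᵀ Q S⁻¹ = D` and `D² = S (P Q) S⁻¹`; in particular the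
diagonal entries of `D` are the square roots of the eigenvalues of `P Q`, which are real and
positive. -/
theorem exists_balancing_transformation {n : ℕ}
    (P Q : Matrix (Fin n) (Fin n) ℝ) (hP : P.PosDef) (hQ : Q.PosDef) :
    ∃ S D : Matrix (Fin n) (Fin n) ℝ,
      IsUnit S.det ∧
      D.IsDiag ∧
      (∀ i : Fin n, 0 < D i i) ∧
      S * P * Sᵀ = D ∧
      (S⁻¹)ᵀ * Q * S⁻¹ = D ∧
      D * D = S * (P * Q) * S⁻¹ := by
  obtain ⟨S, σ, hS, hσ, hSPQ⟩ := hP.exists_contragredient_eq_diagonal hQ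
  have hDD := contragredient_fst_mul_snd hS (P, Q)
  simp only [RCLike.ofReal_real_eq_id, id] at hSPQ
  rw [hSPQ] at hDD
  simp only [contragredient, conjTranspose_eq_transpose_of_trivial, Prod.mk.injEq] at hSPQ
  exact ⟨S, diagonal σ, (isUnit_iff_isUnit_det S).mp hS, isDiag_diagonal σ, by simpa using hσ,
    hSPQ.1, hSPQ.2, hDD⟩
end

section
/- Let n ∈ ℕ, r, c ∈ ℝ, let ξ : {1,…,n} → ℝ, let K = (k_{ij}) be a real n×n matrix, and let x₀ ∈ ℝⁿ. Set A := r·I (with I the n×n identity), N_i := ξ_i e_i e_iᵀ for i = 1,…,n (where e_i is the i-th standard basis vector), and h_{ij} := 2r + c ξ_i ξ_j k_{ij}. Define F : ℝ → (real n×n matrices) entrywise by F(t)_{ij} := exp(h_{ij} t) · x₀ᵢ x₀ⱼ. Then F(0) = x₀ x₀ᵀ and, for all t ∈ ℝ, F'(t) = A F(t) + F(t) Aᵀ + c Σ_{i,j=1}^{n} k_{ij} N_i F(t) N_jᵀ. -/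
open Matrix

/-
With `A = r I` and `N_i = ξ_i e_i e_iᵀ`, each congruence `N_i F N_jᵀ` only retains the entry
`(i, j)` of `F`, scaled by `ξ_i ξ_j`, so the generalized Lyapunov operator acts on the entries
of `F` as the Hadamard multiplier `h_{ij} = 2 r + c ξ_i ξ_j k_{ij}`. The matrix equation thus
decouples into the scalar equations `ḟ_{ij} = h_{ij} f_{ij}`, solved by `e^{h_{ij} t} f_{ij}(0)`.
-/

namespace Matrix

variable {ι R : Type*} [Fintype ι] [DecidableEq ι] [CommRing R]

theorem sum_sum_smul_smul_single_mul_mul_transpose (ξ : ι → R) (K M : Matrix ι ι R) :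
    ∑ i', ∑ j', K i' j' • ((ξ i' • single i' i' (1 : R)) * M * (ξ j' • single j' j' 1)ᵀ) =
      of fun i j => ξ i * ξ j * K i j * M i j := by
  simp only [smul_single, transpose_single, single_mul_mul_single, smul_eq_mul]
  rw [sum_sum_single]
  ext i j
  simp only [of_apply]
  ring

theorem generalizedLyapunov_scalar_diagonal_apply (r c : R) (ξ : ι → R) (K M : Matrix ι ι R)
    (i j : ι) :
    ((r • 1 : Matrix ι ι R) * M + M * (r • 1 : Matrix ι ι R)ᵀ +
        c • ∑ i', ∑ j', K i' j' • ((ξ i' • single i' i' (1 : R)) * M * (ξ j' • single j' j' 1)ᵀ))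
        i j =
      (2 * r + c * ξ i * ξ j * K i j) * M i j := by
  rw [sum_sum_smul_smul_single_mul_mul_transpose]
  simp only [transpose_smul, transpose_one, Matrix.smul_mul, Matrix.mul_smul, one_mul, mul_one,
    add_apply, smul_apply, of_apply, smul_eq_mul]
  ring

end Matrix

theorem hasDerivAt_exp_mul_mul (h a t : ℝ) :
    HasDerivAt (fun s => Real.exp (h * s) * a) (h * (Real.exp (h * t) * a)) t :=
  (((hasDerivAt_id' t).const_mul h).exp.mul_const a).congr_deriv (by ring)

/-- For the multi-asset model with `A = r I` and `N_i = ξ_i e_i e_iᵀ`, the matrix function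
`F(t)` with entries `F(t)_{ij} = exp(h_{ij} t) x₀ᵢ x₀ⱼ`, where
`h_{ij} = 2 r + c ξ_i ξ_j k_{ij}`, satisfies `F(0) = x₀ x₀ᵀ` and the generalized Lyapunov
differential equation `F'(t) = A F(t) + F(t) Aᵀ + c Σ_{i,j} k_{ij} N_i F(t) N_jᵀ`. -/
theorem explicit_solution_generalized_lyapunov_ode {n : ℕ}
    (r c : ℝ) (ξ : Fin n → ℝ) (K : Matrix (Fin n) (Fin n) ℝ) (x₀ : Fin n → ℝ)
    (A : Matrix (Fin n) (Fin n) ℝ) (hA : A = r • (1 : Matrix (Fin n) (Fin n) ℝ))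
    (N : Fin n → Matrix (Fin n) (Fin n) ℝ)
    (hN : ∀ i : Fin n, N i = ξ i • Matrix.single i i (1 : ℝ))
    (h : Fin n → Fin n → ℝ) (hh : ∀ i j : Fin n, h i j = 2 * r + c * ξ i * ξ j * K i j)
    (F : ℝ → Matrix (Fin n) (Fin n) ℝ)
    (hF : ∀ t : ℝ, F t = Matrix.of fun i j => Real.exp (h i j * t) * (x₀ i * x₀ j)) :
    F 0 = vecMulVec x₀ x₀ ∧
    ∀ t : ℝ, ∀ i j : Fin n,
      HasDerivAt (fun s => F s i j)
        ((A * F t + F t * Aᵀ +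
          c • ∑ i' : Fin n, ∑ j' : Fin n, K i' j' • (N i' * F t * (N j')ᵀ)) i j) t := by
  subst hA
  obtain rfl : N = fun i => ξ i • Matrix.single i i (1 : ℝ) := funext hN
  obtain rfl : F = fun t => Matrix.of fun i j => Real.exp (h i j * t) * (x₀ i * x₀ j) :=
    funext hF
  refine ⟨?_, fun t i j => ?_⟩
  · ext i j
    simp [vecMulVec_apply]
  · rw [generalizedLyapunov_scalar_diagonal_apply, ← hh]
    exact hasDerivAt_exp_mul_mul (h i j) (x₀ i * x₀ j) t
end

section
/- Let n ∈ ℕ, r, c ∈ ℝ, T > 0, let ξ : {1,…,n} → ℝ, let K = (k_{ij}) be a real n×n matrix, and let x₀ ∈ ℝⁿ. Set A := r·I, N_i := ξ_i e_i e_iᵀ, h_{ij} := 2r + c ξ_i ξ_j k_{ij}, and assume h_{ij} ≠ 0 for all i, j. Let F(t) be the matrix with entries F(t)_{ij} = exp(h_{ij} t) x₀ᵢ x₀ⱼ, and let P be the matrix with entries P_{ij} := ((exp(h_{ij} T) − 1)/h_{ij}) · x₀ᵢ x₀ⱼ. Then P = ∫₀ᵀ F(t) dt, and P satisfies the generalized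 Lyapunov equation F(T) − x₀ x₀ᵀ = A P + P Aᵀ + c Σ_{i,j=1}^{n} k_{ij} N_i P N_jᵀ. -/
open Matrix

open scoped BigOperators

/-!
Because `A = r I` and every `N_i` is a multiple of the diagonal matrix unit `e_i e_iᵀ`, the
generalized Lyapunov operator acts entrywise: it is the Hadamard product with `(h_{ij})`.
Both claims then reduce, entry by entry, to `∫₀ᵀ exp (h t) dt = (exp (h T) - 1) / h`.
-/

theorem integral_exp_mul {a : ℝ} (ha : a ≠ 0) (t₀ t₁ : ℝ) :
    ∫ t in t₀..t₁, Real.exp (a * t) = (Real.exp (a * t₁) - Real.exp (a * t₀)) / a := by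
  rw [intervalIntegral.integral_comp_mul_left (fun t => Real.exp t) ha, integral_exp,
    smul_eq_mul, inv_mul_eq_div]

namespace Matrix

variable {ι α : Type*} [Fintype ι] [DecidableEq ι] [CommRing α]

theorem smul_single_mul_mul_transpose_smul_single (ξ : ι → α) (P : Matrix ι ι α) (i j : ι) :
    (ξ i • single i i 1) * P * (ξ j • single j j 1)ᵀ = single i j (ξ i * ξ j * P i j) := by
  rw [smul_single, smul_single, transpose_single, single_mul_mul_single]
  ring_nf

theorem sum_sum_smul_single_mul_mul_transpose (ξ : ι → α) (K P : Matrix ι ι α) :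
    ∑ i, ∑ j, K i j • ((ξ i • single i i 1) * P * (ξ j • single j j 1)ᵀ) =
      of (fun i j => ξ i * ξ j * K i j) ⊙ P := by
  simp_rw [smul_single_mul_mul_transpose_smul_single, smul_single, sum_sum_single]
  ext i j
  simp only [of_apply, hadamard_apply, smul_eq_mul]
  ring

theorem lyapunov_smul_one_diagonal_noise_eq_hadamard (r c : α) (ξ : ι → α)
    (K P : Matrix ι ι α) :
    (r • 1 : Matrix ι ι α) * P + P * (r • 1 : Matrix ι ι α)ᵀ +
        c • ∑ i, ∑ j, K i j • ((ξ i • single i i 1) * P * (ξ j • single j j 1)ᵀ) =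
      of (fun i j => 2 * r + c * ξ i * ξ j * K i j) ⊙ P := by
  rw [sum_sum_smul_single_mul_mul_transpose, transpose_smul, transpose_one, Matrix.smul_mul,
    one_mul, Matrix.mul_smul, mul_one]
  ext i j
  simp only [add_apply, smul_apply, hadamard_apply, of_apply, smul_eq_mul]
  ring

end Matrix

theorem explicit_reachability_gramian_general {n : ℕ}
    (r c T : ℝ)
    (ξ : Fin n → ℝ) (K : Matrix (Fin n) (Fin n) ℝ) (x₀ : Fin n → ℝ)
    (A : Matrix (Fin n) (Fin n) ℝ) (hA : A = r • (1 : Matrix (Fin n) (Fin n) ℝ))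
    (N : Fin n → Matrix (Fin n) (Fin n) ℝ)
    (hN : ∀ i : Fin n, N i = ξ i • Matrix.single i i (1 : ℝ))
    (h : Fin n → Fin n → ℝ) (hh : ∀ i j : Fin n, h i j = 2 * r + c * ξ i * ξ j * K i j)
    (hne : ∀ i j : Fin n, h i j ≠ 0)
    (F : ℝ → Matrix (Fin n) (Fin n) ℝ)
    (hF : ∀ t : ℝ, F t = Matrix.of fun i j => Real.exp (h i j * t) * (x₀ i * x₀ j))
    (P : Matrix (Fin n) (Fin n) ℝ)
    (hP : P = Matrix.of fun i j => ((Real.exp (h i j * T) - 1) / h i j) * (x₀ i * x₀ j)) :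
    (∀ i j : Fin n, P i j = ∫ t in (0 : ℝ)..T, F t i j) ∧
    F T - vecMulVec x₀ x₀ =
      A * P + P * Aᵀ + c • ∑ i : Fin n, ∑ j : Fin n, K i j • (N i * P * (N j)ᵀ) := by
  refine ⟨fun i j => ?_, ?_⟩
  · simp only [hP, hF, of_apply, intervalIntegral.integral_mul_const,
      integral_exp_mul (hne i j), mul_zero, Real.exp_zero]
  · simp_rw [hA, hN, lyapunov_smul_one_diagonal_noise_eq_hadamard]
    ext i j
    simp only [hF, hP, Matrix.sub_apply, vecMulVec_apply, hadamard_apply, of_apply, ← hh]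
    field_simp [hne i j]

/-- Explicit closed form of the time-limited reachability Gramian for the multi-asset model
with `A = r I` and `N_i = ξ_i e_i e_iᵀ`: the matrix `P` with entries
`P_{ij} = ((exp(h_{ij} T) - 1)/h_{ij}) x₀ᵢ x₀ⱼ`, where `h_{ij} = 2 r + c ξ_i ξ_j k_{ij} ≠ 0`,
equals `∫₀ᵀ F(t) dt` for `F(t)_{ij} = exp(h_{ij} t) x₀ᵢ x₀ⱼ`, and satisfies the generalized
Lyapunov equation `F(T) - x₀ x₀ᵀ = A P + P Aᵀ + c Σ_{i,j} k_{ij} N_i P N_jᵀ`. -/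
theorem explicit_reachability_gramian {n : ℕ}
    (r c T : ℝ) (hT : 0 < T)
    (ξ : Fin n → ℝ) (K : Matrix (Fin n) (Fin n) ℝ) (x₀ : Fin n → ℝ)
    (A : Matrix (Fin n) (Fin n) ℝ) (hA : A = r • (1 : Matrix (Fin n) (Fin n) ℝ))
    (N : Fin n → Matrix (Fin n) (Fin n) ℝ)
    (hN : ∀ i : Fin n, N i = ξ i • Matrix.single i i (1 : ℝ))
    (h : Fin n → Fin n → ℝ) (hh : ∀ i j : Fin n, h i j = 2 * r + c * ξ i * ξ j * K i j)
    (hne : ∀ i j : Fin n, h i j ≠ 0)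
    (F : ℝ → Matrix (Fin n) (Fin n) ℝ)
    (hF : ∀ t : ℝ, F t = Matrix.of fun i j => Real.exp (h i j * t) * (x₀ i * x₀ j))
    (P : Matrix (Fin n) (Fin n) ℝ)
    (hP : P = Matrix.of fun i j => ((Real.exp (h i j * T) - 1) / h i j) * (x₀ i * x₀ j)) :
    (∀ i j : Fin n, P i j = ∫ t in (0 : ℝ)..T, F t i j) ∧
    F T - vecMulVec x₀ x₀ =
      A * P + P * Aᵀ + c • ∑ i : Fin n, ∑ j : Fin n, K i j • (N i * P * (N j)ᵀ) :=
  explicit_reachability_gramian_general r c T ξ K x₀ A hA N hN h hh hne F hF P hP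
end
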